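/- arXiv:1911.08014 — 5 statements merged into one kernel-verified Lean document; each statement's English description precedes it below -/
import Mathlib

section
/- Let L1, M1, L2, M2 be Lagrangians in (ℝ^{2n}, ω) such that the triples (L1,M1,L2) and (L1,M2,L2) are each pairwise transverse. Then the cross ratio B := [L1,M1,L2,M2] : L1 → L1 is selfadjoint with respect to both Maslov forms [L1,M1,L2] and [L1,M2,L2] on L1; that is, for β equal to either of these symmetric bilinear forms and for all v, w ∈ L1, one has β(Bv, w) = β(v, Bw). -/
open Matrix

noncomputable section

/-- The symplectic vector space `ℝ^{2n}`, with coordinates indexed by `Fin n ⊕ Fin n`. -/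
abbrev V2 (n : ℕ) : Type := (Fin n ⊕ Fin n) → ℝ

/-- The standard matrix `J = [[0, Id],[−Id, 0]]`. -/
def Jn (n : ℕ) : Matrix (Fin n ⊕ Fin n) (Fin n ⊕ Fin n) ℝ :=
  Matrix.fromBlocks 0 1 (-1) 0

/-- The standard symplectic form `ω(x,y) = ᵀx J y` on `ℝ^{2n}`. -/
def omegaForm (n : ℕ) (x y : V2 n) : ℝ := x ⬝ᵥ (Jn n).mulVec y

/-- A subspace is Lagrangian if it has dimension `n` and `ω` vanishes on it. -/
def IsLagrangian (n : ℕ) (L : Submodule ℝ (V2 n)) : Prop :=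
  Module.finrank ℝ L = n ∧ ∀ x ∈ L, ∀ y ∈ L, omegaForm n x y = 0

/-- Membership in `Sp(2n,ℝ)`: `ᵀg J g = J`. -/
def IsSymplectic (n : ℕ) (g : Matrix (Fin n ⊕ Fin n) (Fin n ⊕ Fin n) ℝ) : Prop :=
  gᵀ * Jn n * g = Jn n

/-- `φ : L → L'` is the map whose graph is `M`, i.e. `M = {e + φ e : e ∈ L}`. -/
def IsGraphMap (n : ℕ) (L M L' : Submodule ℝ (V2 n)) (φ : L →ₗ[ℝ] L') : Prop :=
  ∀ x : V2 n, x ∈ M ↔ ∃ e : L, x = (e : V2 n) + (φ e : V2 n)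

lemma Jn_transpose (n : ℕ) : (Jn n)ᵀ = -(Jn n) := by
  ext i j
  rcases i with i | i <;> rcases j with j | j <;>
    simp [Jn, Matrix.fromBlocks, Matrix.transpose_apply, Matrix.one_apply, eq_comm]

lemma omega_antisymm (n : ℕ) (x y : V2 n) : omegaForm n x y = - omegaForm n y x := by
  unfold omegaForm
  rw [Matrix.dotProduct_mulVec, ← Matrix.mulVec_transpose, Jn_transpose,
    Matrix.neg_mulVec, neg_dotProduct, dotProduct_comm]

lemma omega_add_left (n : ℕ) (x y z : V2 n) :
    omegaForm n (x + y) z = omegaForm n x z + omegaForm n y z := by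
  simp [omegaForm, add_dotProduct]

lemma omega_neg_left (n : ℕ) (x y : V2 n) : omegaForm n (-x) y = - omegaForm n x y := by
  simp [omegaForm, neg_dotProduct]

lemma omega_neg_right (n : ℕ) (x y : V2 n) : omegaForm n x (-y) = - omegaForm n x y := by
  simp [omegaForm, Matrix.mulVec_neg, dotProduct_neg]

lemma omega_add_right (n : ℕ) (x y z : V2 n) :
    omegaForm n x (y + z) = omegaForm n x y + omegaForm n x z := by
  simp [omegaForm, Matrix.mulVec_add, dotProduct_add]

lemma maslov_symm (n : ℕ) (L L' M : Submodule ℝ (V2 n))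
    (hL : IsLagrangian n L) (hL' : IsLagrangian n L') (hM : IsLagrangian n M)
    (φ : L →ₗ[ℝ] L') (hφ : IsGraphMap n L M L' φ) (e f : L) :
    omegaForm n (e : V2 n) (φ f : V2 n) = omegaForm n (f : V2 n) (φ e : V2 n) := by
  have h1 : (e : V2 n) + (φ e : V2 n) ∈ M := (hφ _).mpr ⟨e, rfl⟩
  have h2 : (f : V2 n) + (φ f : V2 n) ∈ M := (hφ _).mpr ⟨f, rfl⟩
  have h0 : omegaForm n ((e : V2 n) + (φ e : V2 n)) ((f : V2 n) + (φ f : V2 n)) = 0 :=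
    hM.2 _ h1 _ h2
  rw [omega_add_left, omega_add_right, omega_add_right] at h0
  have hef : omegaForm n (e : V2 n) (f : V2 n) = 0 := hL.2 _ e.2 _ f.2
  have hpp : omegaForm n (φ e : V2 n) (φ f : V2 n) = 0 := hL'.2 _ (φ e).2 _ (φ f).2
  have ha := omega_antisymm n ((φ e : V2 n)) ((f : V2 n))
  linarith

lemma graph_inverse (n : ℕ) (L1 L2 M2 : Submodule ℝ (V2 n)) (h12 : L1 ⊓ L2 = ⊥)
    (φ2 : L2 →ₗ[ℝ] L1) (hφ2 : IsGraphMap n L2 M2 L1 φ2)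
    (ψ2 : L1 →ₗ[ℝ] L2) (hψ2 : IsGraphMap n L1 M2 L2 ψ2) :
    (∀ e : L1, φ2 (ψ2 e) = e) ∧ (∀ f : L2, ψ2 (φ2 f) = f) := by
  have key : ∀ (e : L1) (f : L2), (e : V2 n) + (ψ2 e : V2 n) = (f : V2 n) + (φ2 f : V2 n) →
      φ2 f = e ∧ ψ2 e = f := by
    intro e f hef
    have hv : (e : V2 n) - (φ2 f : V2 n) = (f : V2 n) - (ψ2 e : V2 n) := by
      linear_combination hef
    have hmem : (e : V2 n) - (φ2 f : V2 n) ∈ L1 ⊓ L2 := by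
      refine ⟨sub_mem e.2 (φ2 f).2, ?_⟩
      rw [hv]; exact sub_mem f.2 (ψ2 e).2
    rw [h12, Submodule.mem_bot, sub_eq_zero] at hmem
    constructor
    · exact Subtype.ext hmem.symm
    · apply Subtype.ext
      have : (f : V2 n) - (ψ2 e : V2 n) = 0 := by rw [← hv, hmem, sub_self]
      rw [sub_eq_zero] at this
      exact this.symm
  constructor
  · intro e
    obtain ⟨f, hf⟩ := (hφ2 _).mp ((hψ2 _).mpr ⟨e, rfl⟩)
    obtain ⟨h1, h2⟩ := key e f hf
    rw [h2, h1]
  · intro f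
    obtain ⟨e, he⟩ := (hψ2 _).mp ((hφ2 _).mpr ⟨f, rfl⟩)
    obtain ⟨h1, h2⟩ := key e f he.symm
    rw [h1, h2]

/-- The cross ratio `B = [L1,M1,L2,M2] = −(M2)_{L2→L1} ∘ (M1)_{L1→L2}` is selfadjoint with
respect to the Maslov forms `[L1,M1,L2]` (given by `φ1`) and `[L1,M2,L2]` (given by `ψ2`). -/
theorem cross_ratio_selfadjoint (n : ℕ) (L1 M1 L2 M2 : Submodule ℝ (V2 n))
    (hL1 : IsLagrangian n L1) (hM1 : IsLagrangian n M1)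
    (hL2 : IsLagrangian n L2) (hM2 : IsLagrangian n M2)
    (h1M1 : L1 ⊓ M1 = ⊥) (hM1L2 : M1 ⊓ L2 = ⊥) (h12 : L1 ⊓ L2 = ⊥)
    (h1M2 : L1 ⊓ M2 = ⊥) (hM2L2 : M2 ⊓ L2 = ⊥)
    (φ1 : L1 →ₗ[ℝ] L2) (hφ1 : IsGraphMap n L1 M1 L2 φ1)
    (φ2 : L2 →ₗ[ℝ] L1) (hφ2 : IsGraphMap n L2 M2 L1 φ2)
    (ψ2 : L1 →ₗ[ℝ] L2) (hψ2 : IsGraphMap n L1 M2 L2 ψ2) :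
    (∀ v w : ↥L1,
      omegaForm n ((-(φ2 (φ1 v)) : ↥L1) : V2 n) (φ1 w : V2 n) =
        omegaForm n (v : V2 n) (φ1 (-(φ2 (φ1 w))) : V2 n)) ∧
    (∀ v w : ↥L1,
      omegaForm n ((-(φ2 (φ1 v)) : ↥L1) : V2 n) (ψ2 w : V2 n) =
        omegaForm n (v : V2 n) (ψ2 (-(φ2 (φ1 w))) : V2 n)) := by

  obtain ⟨hinv1, hinv2⟩ := graph_inverse n L1 L2 M2 h12 φ2 hφ2 ψ2 hψ2
  have msφ1 := maslov_symm n L1 L2 M1 hL1 hL2 hM1 φ1 hφ1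
  have msφ2 := maslov_symm n L2 L1 M2 hL2 hL1 hM2 φ2 hφ2
  refine ⟨fun v w => ?_, fun v w => ?_⟩
  · simp only [map_neg, NegMemClass.coe_neg, omega_neg_left, omega_neg_right]
    have a1 := omega_antisymm n ((φ2 (φ1 v) : V2 n)) ((φ1 w : V2 n))
    have a2 := msφ2 (φ1 w) (φ1 v)
    have a3 := msφ1 v (φ2 (φ1 w))
    have a4 := omega_antisymm n ((φ2 (φ1 w) : V2 n)) ((φ1 v : V2 n))
    linarith
  · simp only [map_neg, NegMemClass.coe_neg, omega_neg_left, omega_neg_right]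
    rw [hinv2 (φ1 w)]
    have b1 := omega_antisymm n ((φ2 (φ1 v) : V2 n)) ((ψ2 w : V2 n))
    have b2 := msφ2 (ψ2 w) (φ1 v)
    rw [hinv1 w] at b2
    have b3 := omega_antisymm n ((φ1 v : V2 n)) ((w : V2 n))
    have b4 := msφ1 w v
    linarith
end
end

section
/- Let L1, M1, L2, M2 be Lagrangians in (ℝ^{2n}, ω) such that the triples (L1,M1,L2) and (L1,M2,L2) are each pairwise transverse. If the Maslov form [L1,M1,L2] is positive definite, then the cross ratio [L1,M1,L2,M2] : L1 → L1 is diagonalizable over ℝ. If moreover the Maslov form [L2,M2,L1] is also positive definite, then all eigenvalues of [L1,M1,L2,M2] are positive real numbers. -/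
open Matrix

noncomputable section

/-!
The Maslov form `B = [L1,M1,L2]` is symmetric because `M1` is Lagrangian, and likewise
`C = [L2,M2,L1]`. Antisymmetry of `ω` gives `B(T v, w) = C(φ1 w, φ1 v)` for the cross ratio
`T = -φ2 ∘ φ1`, so `T` is self-adjoint for `B`. When `B` is positive definite it is an inner
product on `L1`, and the spectral theorem diagonalizes `T`. If `C` is positive definite too,
an eigenvector `v` with eigenvalue `μ` gives `μ B(v,v) = B(T v, v) = C(φ1 v, φ1 v) > 0`.
-/

section SelfAdjoint

variable {E : Type*} [AddCommGroup E] [Module ℝ E] {B : LinearMap.BilinForm ℝ E}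
  {T : Module.End ℝ E}

theorem exists_eigenbasis_of_isSelfAdjoint [FiniteDimensional ℝ E] (hB : B.IsSymm)
    (hpos : ∀ v, v ≠ 0 → 0 < B v v) (hT : B.IsSelfAdjoint T) :
    ∃ (b : Module.Basis (Fin (Module.finrank ℝ E)) ℝ E) (μ : Fin (Module.finrank ℝ E) → ℝ),
      ∀ i, T (b i) = μ i • b i := by
  let core : InnerProductSpace.Core ℝ E :=
    { inner := fun v w => B v w
      conj_inner_symm := fun v w => hB.eq w v
      re_inner_nonneg := fun v => by
        rcases eq_or_ne v 0 with rfl | hv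
        · simp
        · exact (hpos v hv).le
      definite := fun v hv => by_contra fun h => (hpos v h).ne' hv
      add_left := fun x y z => by simp
      smul_left := fun x y r => by simp }
  let : NormedAddCommGroup E := core.toNormedAddCommGroup
  let : InnerProductSpace ℝ E := InnerProductSpace.ofCore core.toCore
  have hsym : T.IsSymmetric := hT
  exact ⟨(hsym.eigenvectorBasis rfl).toBasis, hsym.eigenvalues rfl,
    fun i => by simp [hsym.apply_eigenvectorBasis rfl i]⟩

theorem pos_of_hasEigenvalue_of_pos (hBpos : ∀ v, v ≠ 0 → 0 < B v v)
    (hTpos : ∀ v, v ≠ 0 → 0 < B (T v) v) {μ : ℝ} (hμ : T.HasEigenvalue μ) : 0 < μ := by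
  obtain ⟨v, hv⟩ := hμ.exists_hasEigenvector
  have hμv : B (T v) v = μ * B v v := by simp [hv.apply_eq_smul]
  exact pos_of_mul_pos_left (hμv ▸ hTpos v hv.2) (hBpos v hv.2).le

end SelfAdjoint

def omega (n : ℕ) : LinearMap.BilinForm ℝ (V2 n) := Matrix.toLinearMap₂' ℝ (Jn n)

@[simp]
theorem omega_apply (n : ℕ) (x y : V2 n) : omega n x y = omegaForm n x y :=
  Matrix.toLinearMap₂'_apply' _ _ _

theorem omegaForm_swap (n : ℕ) (x y : V2 n) : omegaForm n y x = -omegaForm n x y := by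
  have hJ : (Jn n)ᵀ = -Jn n := by simp [Jn, Matrix.fromBlocks_transpose, Matrix.fromBlocks_neg]
  rw [omegaForm, dotProduct_mulVec, ← Matrix.mulVec_transpose, hJ, Matrix.neg_mulVec,
    neg_dotProduct, dotProduct_comm, omegaForm]

def IsIsotropic (n : ℕ) (L : Submodule ℝ (V2 n)) : Prop :=
  ∀ x ∈ L, ∀ y ∈ L, omegaForm n x y = 0

theorem IsLagrangian.isIsotropic {n : ℕ} {L : Submodule ℝ (V2 n)} (hL : IsLagrangian n L) :
    IsIsotropic n L :=
  hL.2

section Maslov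

variable {n : ℕ} {L L' M : Submodule ℝ (V2 n)}

/-- The Maslov form `[L, M, L'] (v, w) = ω(v, φ w)`, where `φ : L → L'` has graph `M`. -/
def maslovForm (φ : L →ₗ[ℝ] L') : LinearMap.BilinForm ℝ L :=
  (omega n).compl₁₂ L.subtype (L'.subtype ∘ₗ φ)

@[simp]
theorem maslovForm_apply (φ : L →ₗ[ℝ] L') (v w : L) :
    maslovForm φ v w = omegaForm n v (φ w) := by
  simp [maslovForm]

theorem maslovForm_isSymm (hL : IsIsotropic n L) (hL' : IsIsotropic n L')
    (hM : IsIsotropic n M) {φ : L →ₗ[ℝ] L'} (hφ : IsGraphMap n L M L' φ) :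
    (maslovForm φ).IsSymm := by
  refine ⟨fun v w => ?_⟩
  have hgraph := hM _ ((hφ _).2 ⟨v, rfl⟩) _ ((hφ _).2 ⟨w, rfl⟩)
  simp only [← omega_apply, map_add, LinearMap.add_apply] at hgraph
  simp only [omega_apply, hL _ v.2 _ w.2, hL' _ (φ v).2 _ (φ w).2] at hgraph
  simp only [maslovForm_apply]
  linarith [omegaForm_swap n (w : V2 n) (φ v)]

theorem maslovForm_neg_comp_apply (φ₁ : L →ₗ[ℝ] L') (φ₂ : L' →ₗ[ℝ] L) (v w : L) :
    maslovForm φ₁ ((-(φ₂ ∘ₗ φ₁)) v) w = maslovForm φ₂ (φ₁ w) (φ₁ v) := by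
  simp only [maslovForm_apply, LinearMap.neg_apply, LinearMap.comp_apply, Submodule.coe_neg]
  simp only [← omega_apply, map_neg, LinearMap.neg_apply]
  rw [omega_apply, omega_apply, omegaForm_swap, neg_neg]

theorem maslovForm_isSelfAdjoint_neg_comp {φ₁ : L →ₗ[ℝ] L'} {φ₂ : L' →ₗ[ℝ] L}
    (hB : (maslovForm φ₁).IsSymm) (hC : (maslovForm φ₂).IsSymm) :
    (maslovForm φ₁).IsSelfAdjoint (-(φ₂ ∘ₗ φ₁)) := fun v w =>
  calc maslovForm φ₁ ((-(φ₂ ∘ₗ φ₁)) v) w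
      = maslovForm φ₂ (φ₁ w) (φ₁ v) := maslovForm_neg_comp_apply φ₁ φ₂ v w
    _ = maslovForm φ₂ (φ₁ v) (φ₁ w) := (hC.eq _ _).symm
    _ = maslovForm φ₁ ((-(φ₂ ∘ₗ φ₁)) w) v := (maslovForm_neg_comp_apply φ₁ φ₂ w v).symm
    _ = maslovForm φ₁ v ((-(φ₂ ∘ₗ φ₁)) w) := hB.eq _ _

theorem maslovForm_neg_comp_pos {φ₁ : L →ₗ[ℝ] L'} {φ₂ : L' →ₗ[ℝ] L}
    (hB : ∀ v, v ≠ 0 → 0 < maslovForm φ₁ v v) (hC : ∀ w, w ≠ 0 → 0 < maslovForm φ₂ w w)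
    (v : L) (hv : v ≠ 0) : 0 < maslovForm φ₁ ((-(φ₂ ∘ₗ φ₁)) v) v := by
  have hφ₁v : φ₁ v ≠ 0 := fun h => by simpa [h, omegaForm] using hB v hv
  simpa only [maslovForm_neg_comp_apply] using hC _ hφ₁v

end Maslov

theorem cross_ratio_diagonalizable_general (n : ℕ) (L1 M1 L2 M2 : Submodule ℝ (V2 n))
    (hL1 : IsLagrangian n L1) (hM1 : IsLagrangian n M1)
    (hL2 : IsLagrangian n L2) (hM2 : IsLagrangian n M2)
    (φ1 : L1 →ₗ[ℝ] L2) (hφ1 : IsGraphMap n L1 M1 L2 φ1)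
    (φ2 : L2 →ₗ[ℝ] L1) (hφ2 : IsGraphMap n L2 M2 L1 φ2)
    (hpos1 : ∀ v : ↥L1, v ≠ 0 → 0 < omegaForm n (v : V2 n) (φ1 v : V2 n)) :
    (∃ (b : Module.Basis (Fin (Module.finrank ℝ ↥L1)) ℝ ↥L1) (μ : Fin (Module.finrank ℝ ↥L1) → ℝ),
      ∀ i, (-(φ2 ∘ₗ φ1)) (b i) = μ i • b i) ∧
    ((∀ w : ↥L2, w ≠ 0 → 0 < omegaForm n (w : V2 n) (φ2 w : V2 n)) →
      ∀ μ : ℝ, Module.End.HasEigenvalue (-(φ2 ∘ₗ φ1) : Module.End ℝ ↥L1) μ → 0 < μ) := by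
  have hB := maslovForm_isSymm hL1.isIsotropic hL2.isIsotropic hM1.isIsotropic hφ1
  have hC := maslovForm_isSymm hL2.isIsotropic hL1.isIsotropic hM2.isIsotropic hφ2
  have hBpos : ∀ v, v ≠ 0 → 0 < maslovForm φ1 v v := by simpa only [maslovForm_apply] using hpos1
  refine ⟨exists_eigenbasis_of_isSelfAdjoint hB hBpos (maslovForm_isSelfAdjoint_neg_comp hB hC),
    fun hpos2 μ hμ => pos_of_hasEigenvalue_of_pos hBpos ?_ hμ⟩
  have hCpos : ∀ w, w ≠ 0 → 0 < maslovForm φ2 w w := by simpa only [maslovForm_apply] using hpos2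
  exact maslovForm_neg_comp_pos hBpos hCpos

/-- If the Maslov form `[L1,M1,L2]` is positive definite then the cross ratio
`[L1,M1,L2,M2] = −(M2)_{L2→L1} ∘ (M1)_{L1→L2}` is diagonalizable over `ℝ`; if moreover
`[L2,M2,L1]` is positive definite then all its eigenvalues are positive. -/
theorem cross_ratio_diagonalizable (n : ℕ) (L1 M1 L2 M2 : Submodule ℝ (V2 n))
    (hL1 : IsLagrangian n L1) (hM1 : IsLagrangian n M1)
    (hL2 : IsLagrangian n L2) (hM2 : IsLagrangian n M2)
    (h1M1 : L1 ⊓ M1 = ⊥) (hM1L2 : M1 ⊓ L2 = ⊥) (h12 : L1 ⊓ L2 = ⊥)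
    (h1M2 : L1 ⊓ M2 = ⊥) (hM2L2 : M2 ⊓ L2 = ⊥)
    (φ1 : L1 →ₗ[ℝ] L2) (hφ1 : IsGraphMap n L1 M1 L2 φ1)
    (φ2 : L2 →ₗ[ℝ] L1) (hφ2 : IsGraphMap n L2 M2 L1 φ2)
    (hpos1 : ∀ v : ↥L1, v ≠ 0 → 0 < omegaForm n (v : V2 n) (φ1 v : V2 n)) :
    (∃ (b : Module.Basis (Fin (Module.finrank ℝ ↥L1)) ℝ ↥L1) (μ : Fin (Module.finrank ℝ ↥L1) → ℝ),
      ∀ i, (-(φ2 ∘ₗ φ1)) (b i) = μ i • b i) ∧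
    ((∀ w : ↥L2, w ≠ 0 → 0 < omegaForm n (w : V2 n) (φ2 w : V2 n)) →
      ∀ μ : ℝ, Module.End.HasEigenvalue (-(φ2 ∘ₗ φ1) : Module.End ℝ ↥L1) μ → 0 < μ) :=
  cross_ratio_diagonalizable_general n L1 M1 L2 M2 hL1 hM1 hL2 hM2 φ1 hφ1 φ2 hφ2 hpos1
end
end

section
/- Let v_1, v_2, v_3, v_4 be pairwise transverse decorated Lagrangians in (ℝ^{2n}, ω) with underlying Lagrangians L_1, L_2, L_3, L_4. Then the matrix of the cross ratio [L_1, L_2, L_3, L_4] : L_1 → L_1 in the basis v_1 (with convention B(v_j) = Σ_i v_i [B]_{ij} for an endomorphism B of L_1) equals −Λ_{31}^{−1}Λ_{34}Λ_{14}^{−1}Λ_{12}Λ_{32}^{−1}Λ_{31}, and also equals −Λ_{41}^{−1}Λ_{43}Λ_{23}^{−1}Λ_{21}. -/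
open Matrix

noncomputable section

/-- A decorated Lagrangian: a basis `v` of a Lagrangian subspace of `ℝ^{2n}`. -/
def IsDecorated (n : ℕ) (v : Fin n → V2 n) : Prop :=
  LinearIndependent ℝ v ∧ IsLagrangian n (Submodule.span ℝ (Set.range v))

/-- The symplectic `Λ`-length of two decorated Lagrangians: `(Λ_{v,w})_{ij} = ω(v_i, w_j)`. -/
def LamM (n : ℕ) (v w : Fin n → V2 n) : Matrix (Fin n) (Fin n) ℝ :=
  fun i j => omegaForm n (v i) (w j)

/-!
Write `v·C` for the frame `j ↦ ∑ᵢ Cᵢⱼ vᵢ`; then `Λ_{w, v·C} = Λ_{w,v} C`, and for transverse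
decorated Lagrangians `Λ_{v,w}` is invertible by nondegeneracy of `ω`. If `φ : L_u → L_v` has
graph `L_w`, write `φ(u) = v·A` and `u + v·A = w·C`; pairing with the isotropic frames `v` and `u`
gives `Λ_{vu} = Λ_{vw} C` and `Λ_{uv} A = Λ_{uw} C`, so `A = Λ_{uv}⁻¹Λ_{uw}Λ_{vw}⁻¹Λ_{vu}`.
Composing two such matrices gives the first formula for the cross ratio.

For the second, decompose an isotropic frame `w = u·P + v·Q` along `L_u ⊕ L_v`; then
`0 = Λ_{ww} = Λ_{wu}P + Λ_{wv}Q` reads `Λ_{wu}Λ_{vu}⁻¹Λ_{vw} = −Λ_{wv}Λ_{uv}⁻¹Λ_{uw}`, and two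
instances of this identity (for `w = v₄` and `w = v₂`) turn one formula into the other.
-/

lemma exists_matrix_sum_smul_eq_of_mem_span {R M ι κ : Type*} [Semiring R] [AddCommMonoid M]
    [Module R M] [Fintype ι] {v : ι → M} {x : κ → M}
    (hx : ∀ j, x j ∈ Submodule.span R (Set.range v)) :
    ∃ C : Matrix ι κ R, (fun j => ∑ i, C i j • v i) = x := by
  choose C hC using fun j => (Submodule.mem_span_range_iff_exists_fun R).mp (hx j)
  exact ⟨fun i j => C j i, funext hC⟩

lemma LinearMap.coe_apply_span_eq_sum_toMatrix {R M ι κ : Type*} [CommRing R] [AddCommGroup M]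
    [Module R M] [Fintype ι] [DecidableEq ι] [Fintype κ] {v : ι → M} {w : κ → M}
    (hv : LinearIndependent R v) (hw : LinearIndependent R w)
    (f : Submodule.span R (Set.range v) →ₗ[R] Submodule.span R (Set.range w)) (j : ι) :
    (f ⟨v j, Submodule.subset_span (Set.mem_range_self j)⟩ : M) =
      ∑ i, LinearMap.toMatrix (Module.Basis.span hv) (Module.Basis.span hw) f i j • w i := by
  rw [← Module.Basis.span_apply hv]
  conv_lhs => rw [← Matrix.toLin_toMatrix (Module.Basis.span hv) (Module.Basis.span hw) f,
    Matrix.toLin_self]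
  simp

def Transverse {n : ℕ} (v w : Fin n → V2 n) : Prop :=
  Submodule.span ℝ (Set.range v) ⊓ Submodule.span ℝ (Set.range w) = ⊥

lemma Transverse.symm {n : ℕ} {v w : Fin n → V2 n} (h : Transverse v w) : Transverse w v := by
  rwa [Transverse, inf_comm]

lemma Jn_eq_neg_J (n : ℕ) : Jn n = -Matrix.J (Fin n) ℝ := by
  simp [Jn, Matrix.J, Matrix.fromBlocks_neg]

lemma isUnit_det_Jn (n : ℕ) : IsUnit (Jn n).det :=
  Matrix.isUnit_det_of_right_inverse (B := -Jn n) <| by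
    rw [Matrix.mul_neg, Jn_eq_neg_J, neg_mul_neg, Matrix.J_squared, neg_neg]

lemma eq_zero_of_omegaForm_left_eq_zero {n : ℕ} {x : V2 n} (h : ∀ y, omegaForm n x y = 0) :
    x = 0 :=
  Matrix.separatingLeft_def.mp
    (Matrix.nondegenerate_of_det_ne_zero (isUnit_det_Jn n).ne_zero).separatingLeft x h

lemma omegaForm_eq_toLinearMap₂' (n : ℕ) (x y : V2 n) :
    omegaForm n x y = Matrix.toLinearMap₂' ℝ (Jn n) x y :=
  (Matrix.toLinearMap₂'_apply' _ _ _).symm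

lemma vecMul_LamM (n : ℕ) (c : Fin n → ℝ) (v w : Fin n → V2 n) :
    c ᵥ* LamM n v w = fun j => omegaForm n (∑ i, c i • v i) (w j) := by
  ext j
  change ∑ i, c i * omegaForm n (v i) (w j) = _
  simp only [omegaForm, sum_dotProduct, smul_dotProduct, smul_eq_mul]

lemma LamM_add_right (n : ℕ) (w x y : Fin n → V2 n) :
    LamM n w (x + y) = LamM n w x + LamM n w y := by
  ext i j
  simp [LamM, omegaForm, Matrix.mulVec_add, dotProduct_add]

lemma LamM_sum_smul_right (n : ℕ) (w v : Fin n → V2 n) (C : Matrix (Fin n) (Fin n) ℝ) :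
    LamM n w (fun j => ∑ i, C i j • v i) = LamM n w v * C := by
  ext i j
  simp [LamM, omegaForm, Matrix.mulVec_sum, dotProduct_sum, Matrix.mul_apply,
    Matrix.mulVec_smul, mul_comm]

lemma IsDecorated.LamM_self_eq_zero {n : ℕ} {v : Fin n → V2 n} (hv : IsDecorated n v) :
    LamM n v v = 0 := by
  ext i j
  exact hv.2.2 _ (Submodule.subset_span (Set.mem_range_self i)) _
    (Submodule.subset_span (Set.mem_range_self j))

lemma IsDecorated.sup_eq_top {n : ℕ} {v w : Fin n → V2 n} (hv : IsDecorated n v)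
    (hw : IsDecorated n w) (hvw : Transverse v w) :
    Submodule.span ℝ (Set.range v) ⊔ Submodule.span ℝ (Set.range w) = ⊤ := by
  apply Submodule.eq_top_of_finrank_eq
  have h := Submodule.finrank_sup_add_finrank_inf_eq (Submodule.span ℝ (Set.range v))
    (Submodule.span ℝ (Set.range w))
  rw [hvw, finrank_bot, add_zero] at h
  simp [h, hv.2.1, hw.2.1]

lemma isUnit_det_LamM {n : ℕ} {v w : Fin n → V2 n} (hv : IsDecorated n v) (hw : IsDecorated n w)
    (hvw : Transverse v w) : IsUnit (LamM n v w).det := by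
  rw [isUnit_iff_ne_zero, Ne, ← Matrix.exists_vecMul_eq_zero_iff]
  rintro ⟨c, hc0, hc⟩
  refine hc0 (funext (Fintype.linearIndependent_iff.mp hv.1 c
    (eq_zero_of_omegaForm_left_eq_zero fun y => ?_)))
  -- `ω(∑ cᵢ vᵢ, ·)` vanishes on `span v` by isotropy and on `span w` since `c ᵥ* Λ_{vw} = 0`.
  have hker : Submodule.span ℝ (Set.range v) ⊔ Submodule.span ℝ (Set.range w) ≤
      LinearMap.ker (Matrix.toLinearMap₂' ℝ (Jn n) (∑ i, c i • v i)) := by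
    refine sup_le ?_ ?_ <;> rw [Submodule.span_le] <;> rintro _ ⟨j, rfl⟩ <;>
      rw [SetLike.mem_coe, LinearMap.mem_ker, ← omegaForm_eq_toLinearMap₂']
    · simpa [hv.LamM_self_eq_zero] using congrFun (vecMul_LamM n c v v).symm j
    · simpa [hc] using congrFun (vecMul_LamM n c v w).symm j
  rw [hv.sup_eq_top hw hvw] at hker
  rw [omegaForm_eq_toLinearMap₂']
  exact hker Submodule.mem_top

lemma exists_eq_sum_smul_add_sum_smul {n : ℕ} {u v : Fin n → V2 n} (hu : IsDecorated n u)
    (hv : IsDecorated n v) (huv : Transverse u v) (w : Fin n → V2 n) :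
    ∃ A B : Matrix (Fin n) (Fin n) ℝ,
      w = (fun j => ∑ i, A i j • u i) + fun j => ∑ i, B i j • v i := by
  have hw : ∀ j, ∃ x ∈ Submodule.span ℝ (Set.range u), ∃ y ∈ Submodule.span ℝ (Set.range v),
      x + y = w j := fun j =>
    Submodule.mem_sup.mp (hu.sup_eq_top hv huv ▸ Submodule.mem_top)
  choose x hx y hy hxy using hw
  obtain ⟨A, hA⟩ := exists_matrix_sum_smul_eq_of_mem_span hx
  obtain ⟨B, hB⟩ := exists_matrix_sum_smul_eq_of_mem_span hy
  exact ⟨A, B, by rw [hA, hB]; exact (funext hxy).symm⟩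

lemma LamM_mul_inv_mul_LamM_eq_neg {n : ℕ} {u v w : Fin n → V2 n} (hu : IsDecorated n u)
    (hv : IsDecorated n v) (hw : LamM n w w = 0) (huv : Transverse u v) :
    LamM n w u * (LamM n v u)⁻¹ * LamM n v w = -(LamM n w v * (LamM n u v)⁻¹ * LamM n u w) := by
  obtain ⟨A, B, hAB⟩ := exists_eq_sum_smul_add_sum_smul hu hv huv w
  have hvw : LamM n v w = LamM n v u * A := by
    rw [hAB, LamM_add_right, LamM_sum_smul_right, LamM_sum_smul_right, hv.LamM_self_eq_zero,
      Matrix.zero_mul, add_zero]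
  have huw : LamM n u w = LamM n u v * B := by
    rw [hAB, LamM_add_right, LamM_sum_smul_right, LamM_sum_smul_right, hu.LamM_self_eq_zero,
      Matrix.zero_mul, zero_add]
  have hww : LamM n w u * A + LamM n w v * B = 0 := by
    rw [← LamM_sum_smul_right, ← LamM_sum_smul_right, ← LamM_add_right, ← hAB, hw]
  rw [hvw, huw, Matrix.mul_assoc, Matrix.nonsing_inv_mul_cancel_left _ _
    (isUnit_det_LamM hv hu huv.symm), Matrix.mul_assoc,
    Matrix.nonsing_inv_mul_cancel_left _ _ (isUnit_det_LamM hu hv huv)]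
  exact eq_neg_of_add_eq_zero_left hww

lemma IsGraphMap.toMatrix_span_eq {n : ℕ} {u v w : Fin n → V2 n} (hu : IsDecorated n u)
    (hv : IsDecorated n v) (hw : IsDecorated n w) (huv : Transverse u v) (hvw : Transverse v w)
    {φ : Submodule.span ℝ (Set.range u) →ₗ[ℝ] Submodule.span ℝ (Set.range v)}
    (hφ : IsGraphMap n (Submodule.span ℝ (Set.range u)) (Submodule.span ℝ (Set.range w))
      (Submodule.span ℝ (Set.range v)) φ) :
    LinearMap.toMatrix (Module.Basis.span hu.1) (Module.Basis.span hv.1) φ =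
      (LamM n u v)⁻¹ * LamM n u w * (LamM n v w)⁻¹ * LamM n v u := by
  set A := LinearMap.toMatrix (Module.Basis.span hu.1) (Module.Basis.span hv.1) φ
  have hgraph : ∀ j, u j + ∑ i, A i j • v i ∈ Submodule.span ℝ (Set.range w) := fun j =>
    (hφ _).mpr ⟨_, by rw [LinearMap.coe_apply_span_eq_sum_toMatrix hu.1 hv.1]⟩
  obtain ⟨C, hC⟩ := exists_matrix_sum_smul_eq_of_mem_span hgraph
  replace hC : (fun j => ∑ i, C i j • w i) = u + fun j => ∑ i, A i j • v i := hC
  have hvC : LamM n v w * C = LamM n v u := by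
    rw [← LamM_sum_smul_right, hC, LamM_add_right, LamM_sum_smul_right, hv.LamM_self_eq_zero,
      Matrix.zero_mul, add_zero]
  have huC : LamM n u w * C = LamM n u v * A := by
    rw [← LamM_sum_smul_right, hC, LamM_add_right, LamM_sum_smul_right, hu.LamM_self_eq_zero,
      zero_add]
  rw [← hvC, Matrix.mul_assoc _ (LamM n v w)⁻¹, Matrix.nonsing_inv_mul_cancel_left _ _
    (isUnit_det_LamM hv hw hvw), Matrix.mul_assoc, huC,
    Matrix.nonsing_inv_mul_cancel_left _ _ (isUnit_det_LamM hu hv huv)]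

lemma LamM_crossRatio_eq {n : ℕ} {v1 v2 v3 v4 : Fin n → V2 n} (h1 : IsDecorated n v1)
    (h2 : IsDecorated n v2) (h3 : IsDecorated n v3) (h4 : IsDecorated n v4)
    (h13 : Transverse v1 v3) (h14 : Transverse v1 v4) (h23 : Transverse v2 v3) :
    (LamM n v3 v1)⁻¹ * LamM n v3 v4 * (LamM n v1 v4)⁻¹ * LamM n v1 v2 *
        (LamM n v3 v2)⁻¹ * LamM n v3 v1 =
      (LamM n v4 v1)⁻¹ * LamM n v4 v3 * (LamM n v2 v3)⁻¹ * LamM n v2 v1 := by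
  have K4 := LamM_mul_inv_mul_LamM_eq_neg h1 h3 h4.LamM_self_eq_zero h13
  have K2 := LamM_mul_inv_mul_LamM_eq_neg h3 h1 h2.LamM_self_eq_zero h13.symm
  have d14 := isUnit_det_LamM h1 h4 h14
  have d23 := isUnit_det_LamM h2 h3 h23
  have d31 := isUnit_det_LamM h3 h1 h13.symm
  have d32 := isUnit_det_LamM h3 h2 h23.symm
  have d41 := isUnit_det_LamM h4 h1 h14.symm
  have hL : ∀ X, (LamM n v3 v1)⁻¹ * (LamM n v3 v4 * X) =
      -((LamM n v4 v1)⁻¹ * (LamM n v4 v3 * ((LamM n v1 v3)⁻¹ * (LamM n v1 v4 * X)))) := fun X =>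
    calc (LamM n v3 v1)⁻¹ * (LamM n v3 v4 * X)
        = (LamM n v4 v1)⁻¹ * ((LamM n v4 v1 * (LamM n v3 v1)⁻¹ * LamM n v3 v4) * X) := by
          simp only [Matrix.mul_assoc, Matrix.nonsing_inv_mul_cancel_left _ _ d41]
      _ = _ := by rw [K4]; simp only [Matrix.neg_mul, Matrix.mul_neg, Matrix.mul_assoc]
  have hR : (LamM n v2 v3)⁻¹ * LamM n v2 v1 =
      -((LamM n v1 v3)⁻¹ * (LamM n v1 v2 * ((LamM n v3 v2)⁻¹ * LamM n v3 v1))) :=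
    calc (LamM n v2 v3)⁻¹ * LamM n v2 v1
        = (LamM n v2 v3)⁻¹ * (LamM n v2 v1 * (LamM n v3 v1)⁻¹ * LamM n v3 v2) *
            ((LamM n v3 v2)⁻¹ * LamM n v3 v1) := by
          simp only [Matrix.mul_assoc, Matrix.mul_nonsing_inv_cancel_left _ _ d32,
            Matrix.nonsing_inv_mul _ d31, Matrix.mul_one]
      _ = _ := by
          rw [← neg_neg (LamM n v2 v1 * _ * _), ← K2]
          simp only [Matrix.neg_mul, Matrix.mul_neg, Matrix.mul_assoc,
            Matrix.nonsing_inv_mul_cancel_left _ _ d23]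
  simp only [Matrix.mul_assoc]
  rw [hL, hR, Matrix.mul_nonsing_inv_cancel_left _ _ d14, Matrix.mul_neg, Matrix.mul_neg]

theorem cross_ratio_matrix_via_lambda_lengths_general (n : ℕ) (v1 v2 v3 v4 : Fin n → V2 n)
    (h1 : IsDecorated n v1) (h2 : IsDecorated n v2)
    (h3 : IsDecorated n v3) (h4 : IsDecorated n v4)
    (h13 : Submodule.span ℝ (Set.range v1) ⊓ Submodule.span ℝ (Set.range v3) = ⊥)
    (h14 : Submodule.span ℝ (Set.range v1) ⊓ Submodule.span ℝ (Set.range v4) = ⊥)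
    (h23 : Submodule.span ℝ (Set.range v2) ⊓ Submodule.span ℝ (Set.range v3) = ⊥) :
    -(((LamM n v3 v1)⁻¹ * LamM n v3 v4 * (LamM n v1 v4)⁻¹ * LamM n v1 v2 *
        (LamM n v3 v2)⁻¹ * LamM n v3 v1)) =
      -((LamM n v4 v1)⁻¹ * LamM n v4 v3 * (LamM n v2 v3)⁻¹ * LamM n v2 v1) ∧
    ∀ (φ : Submodule.span ℝ (Set.range v1) →ₗ[ℝ] Submodule.span ℝ (Set.range v3))
      (ψ : Submodule.span ℝ (Set.range v3) →ₗ[ℝ] Submodule.span ℝ (Set.range v1)),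
      IsGraphMap n (Submodule.span ℝ (Set.range v1)) (Submodule.span ℝ (Set.range v2))
        (Submodule.span ℝ (Set.range v3)) φ →
      IsGraphMap n (Submodule.span ℝ (Set.range v3)) (Submodule.span ℝ (Set.range v4))
        (Submodule.span ℝ (Set.range v1)) ψ →
      ∀ j : Fin n,
        ((ψ (φ ⟨v1 j, Submodule.subset_span (Set.mem_range_self j)⟩) :
            ↥(Submodule.span ℝ (Set.range v1))) : V2 n) =
          -∑ i, (-(((LamM n v3 v1)⁻¹ * LamM n v3 v4 * (LamM n v1 v4)⁻¹ * LamM n v1 v2 *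
              (LamM n v3 v2)⁻¹ * LamM n v3 v1))) i j • v1 i := by
  refine ⟨by rw [LamM_crossRatio_eq h1 h2 h3 h4 h13 h14 h23], fun φ ψ hφ hψ j => ?_⟩
  have hcomp : LinearMap.toMatrix (Module.Basis.span h1.1) (Module.Basis.span h1.1) (ψ ∘ₗ φ) =
      (LamM n v3 v1)⁻¹ * LamM n v3 v4 * (LamM n v1 v4)⁻¹ * LamM n v1 v2 *
        (LamM n v3 v2)⁻¹ * LamM n v3 v1 := by
    rw [LinearMap.toMatrix_comp _ (Module.Basis.span h3.1), 
      hψ.toMatrix_span_eq h3 h1 h4 (Transverse.symm h13) h14,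
      hφ.toMatrix_span_eq h1 h3 h2 h13 (Transverse.symm h23)]
    simp only [Matrix.mul_assoc,
      Matrix.mul_nonsing_inv_cancel_left _ _ (isUnit_det_LamM h1 h3 h13)]
  rw [← LinearMap.comp_apply, LinearMap.coe_apply_span_eq_sum_toMatrix h1.1 h1.1, hcomp]
  simp only [Matrix.neg_apply, neg_smul, Finset.sum_neg_distrib, neg_neg]

/-- The matrix of the cross ratio `[L1,L2,L3,L4] = −(L4)_{L3→L1} ∘ (L2)_{L1→L3}` in the
basis `v1` equals `−Λ31⁻¹Λ34Λ14⁻¹Λ12Λ32⁻¹Λ31 = −Λ41⁻¹Λ43Λ23⁻¹Λ21`. -/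
theorem cross_ratio_matrix_via_lambda_lengths (n : ℕ) (v1 v2 v3 v4 : Fin n → V2 n)
    (h1 : IsDecorated n v1) (h2 : IsDecorated n v2)
    (h3 : IsDecorated n v3) (h4 : IsDecorated n v4)
    (h12 : Submodule.span ℝ (Set.range v1) ⊓ Submodule.span ℝ (Set.range v2) = ⊥)
    (h13 : Submodule.span ℝ (Set.range v1) ⊓ Submodule.span ℝ (Set.range v3) = ⊥)
    (h14 : Submodule.span ℝ (Set.range v1) ⊓ Submodule.span ℝ (Set.range v4) = ⊥)
    (h23 : Submodule.span ℝ (Set.range v2) ⊓ Submodule.span ℝ (Set.range v3) = ⊥)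
    (h24 : Submodule.span ℝ (Set.range v2) ⊓ Submodule.span ℝ (Set.range v4) = ⊥)
    (h34 : Submodule.span ℝ (Set.range v3) ⊓ Submodule.span ℝ (Set.range v4) = ⊥) :
    -(((LamM n v3 v1)⁻¹ * LamM n v3 v4 * (LamM n v1 v4)⁻¹ * LamM n v1 v2 *
        (LamM n v3 v2)⁻¹ * LamM n v3 v1)) =
      -((LamM n v4 v1)⁻¹ * LamM n v4 v3 * (LamM n v2 v3)⁻¹ * LamM n v2 v1) ∧
    ∀ (φ : Submodule.span ℝ (Set.range v1) →ₗ[ℝ] Submodule.span ℝ (Set.range v3))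
      (ψ : Submodule.span ℝ (Set.range v3) →ₗ[ℝ] Submodule.span ℝ (Set.range v1)),
      IsGraphMap n (Submodule.span ℝ (Set.range v1)) (Submodule.span ℝ (Set.range v2))
        (Submodule.span ℝ (Set.range v3)) φ →
      IsGraphMap n (Submodule.span ℝ (Set.range v3)) (Submodule.span ℝ (Set.range v4))
        (Submodule.span ℝ (Set.range v1)) ψ →
      ∀ j : Fin n,
        ((ψ (φ ⟨v1 j, Submodule.subset_span (Set.mem_range_self j)⟩) :
            ↥(Submodule.span ℝ (Set.range v1))) : V2 n) =
          -∑ i, (-(((LamM n v3 v1)⁻¹ * LamM n v3 v4 * (LamM n v1 v4)⁻¹ * LamM n v1 v2 *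
              (LamM n v3 v2)⁻¹ * LamM n v3 v1))) i j • v1 i :=
  cross_ratio_matrix_via_lambda_lengths_general n v1 v2 v3 v4 h1 h2 h3 h4 h13 h14 h23
end
end

section
/- Equip ℝ^{2n} with the standard symplectic form ω and the standard Euclidean inner product, and let L_0 be the span of the first n standard basis vectors. For every Lagrangian M transverse to L_0 there exists a unique n-tuple (φ_1, …, φ_n) of real numbers with 0 < φ_1 ≤ φ_2 ≤ … ≤ φ_n < π such that there exists a symplectic basis (e, f) of ℝ^{2n} which is orthonormal as a 2n-tuple of vectors, with Span(e) = L_0, Span(f) = L_0^⊥ (the Euclidean orthogonal complement), and M = Span{cos(φ_i) e_i + sin(φ_i) f_i : 1 ≤ i ≤ n}. -/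
open Matrix

noncomputable section

/-- `tmul v g` is the tuple `v·g`, with `(v·g)_j = Σ_i g_{ij} • v_i`. -/
def tmul (n : ℕ) (v : Fin n → V2 n) (g : Matrix (Fin n) (Fin n) ℝ) : Fin n → V2 n :=
  fun j => ∑ i, g i j • v i

/-- A symplectic basis of `ℝ^{2n}`: a pair of `n`-tuples forming a basis, with
`ω(e_i,e_j) = ω(f_i,f_j) = 0` and `ω(e_i,f_j) = δ_{ij}`. -/
def IsSymplecticBasis (n : ℕ) (e f : Fin n → V2 n) : Prop :=
  (∀ i j, omegaForm n (e i) (e j) = 0) ∧ (∀ i j, omegaForm n (f i) (f j) = 0) ∧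
  (∀ i j, omegaForm n (e i) (f j) = if i = j then 1 else 0) ∧
  LinearIndependent ℝ (Sum.elim e f) ∧
  Submodule.span ℝ (Set.range (Sum.elim e f)) = ⊤

/-- The standard Euclidean inner product on `ℝ^{2n}`. -/
def stdInner (n : ℕ) (x y : V2 n) : ℝ := ∑ j, x j * y j

/-- The Lagrangian `L_0` spanned by the first `n` standard basis vectors. -/
def L0 (n : ℕ) : Submodule ℝ (V2 n) :=
  Submodule.span ℝ (Set.range fun i : Fin n => (Pi.single (Sum.inl i) 1 : V2 n))


/-!
A Lagrangian `M` transverse to `L₀` is the graph `{(B v, v)}` of a linear map `B` over the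
second factor `0 × ℝⁿ = L₀^⊥`, and `ω` vanishes on `M` exactly when `B` is symmetric.
An orthonormal eigenbasis `u` of `B`, with eigenvalues `cot φ_i`, gives the basis
`e_i = (u_i, 0)`, `f_i = (0, u_i)`, because `cos φ_i e_i + sin φ_i f_i = sin φ_i (B u_i, u_i)`.
Conversely, in any such basis `e_i = (u_i, 0)` and `f_i = (0, w_i)` with `u, w` orthonormal, and
`ω(e_i, f_j) = δ_ij` forces `w = u`; then `B u_i = cot φ_i u_i`, so the `cot φ_i` are the roots
of the characteristic polynomial of `B`, which determine the nondecreasing tuple `φ`.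
-/

open Real

section DotOrthonormal

variable {ι κ R : Type*} [DecidableEq ι] [Fintype κ] [CommRing R]

/-- Orthonormality for the dot product: `κ → R` carries no inner product. -/
abbrev DotOrthonormal (u : ι → κ → R) : Prop :=
  ∀ i j, u i ⬝ᵥ u j = if i = j then 1 else 0

variable {u : ι → κ → R}

theorem DotOrthonormal.linearIndependent (hu : DotOrthonormal u) : LinearIndependent R u := by
  refine linearIndependent_iff'.mpr fun s g hg i hi => ?_
  simpa [sum_dotProduct, hu, hi] using congrArg (· ⬝ᵥ u i) hg

theorem DotOrthonormal.span_eq_top {K : Type*} [Field K] [Fintype ι] {u : ι → κ → K}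
    (hu : DotOrthonormal u) (hcard : Fintype.card ι = Fintype.card κ) :
    Submodule.span K (Set.range u) = ⊤ :=
  hu.linearIndependent.span_eq_top_of_card_eq_finrank' (by simp [hcard])

theorem DotOrthonormal.eq_of_dotProduct_eq_ite [Fintype ι] {u w : ι → ι → R}
    (hw : DotOrthonormal w) (huw : ∀ i j, u i ⬝ᵥ w j = if i = j then 1 else 0) : u = w := by
  have hW : of w * (of w)ᵀ = 1 := by ext i j; exact (hw i j).trans (one_apply ..).symm
  have hUW : of u * (of w)ᵀ = 1 := by ext i j; exact (huw i j).trans (one_apply ..).symm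
  -- `W = W (Wᵀ U) = (W Wᵀ) U = U`
  have : of w = of u := by
    rw [← Matrix.mul_one (of w), ← mul_eq_one_comm.mp hUW, ← Matrix.mul_assoc, hW, Matrix.one_mul]
  exact (congrArg of.symm this).symm

theorem DotOrthonormal.sumElim (hu : DotOrthonormal u) :
    DotOrthonormal (Sum.elim (fun i => Sum.elim (u i) 0) (fun i => Sum.elim 0 (u i))) := by
  rintro (i | i) (j | j) <;> simp [sumElim_dotProduct_sumElim, hu]

end DotOrthonormal

theorem Monotone.eq_of_map_univ_val_eq {α : Type*} [LinearOrder α] {n : ℕ} {φ ψ : Fin n → α}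
    (hφ : Monotone φ) (hψ : Monotone ψ)
    (h : Finset.univ.val.map φ = Finset.univ.val.map ψ) : φ = ψ := by
  rw [Fin.univ_val_map, Fin.univ_val_map, Multiset.coe_eq_coe] at h
  exact List.ofFn_injective <|
    h.eq_of_sortedLE (List.sortedLE_ofFn_iff.mpr hφ) (List.sortedLE_ofFn_iff.mpr hψ)

section Arccot

def arccot (x : ℝ) : ℝ := π / 2 - arctan x

theorem arccot_pos (x : ℝ) : 0 < arccot x := by
  unfold arccot; linarith [arctan_lt_pi_div_two x]

theorem arccot_lt_pi (x : ℝ) : arccot x < π := by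
  unfold arccot; linarith [neg_pi_div_two_lt_arctan x, pi_pos]

theorem arccot_strictAnti : StrictAnti arccot :=
  fun _ _ h => sub_lt_sub_left (arctan_strictMono h) _

theorem cos_arccot (x : ℝ) : cos (arccot x) = x * sin (arccot x) := by
  rw [arccot, cos_pi_div_two_sub, sin_pi_div_two_sub, eq_comm, ← eq_div_iff (cos_arctan_pos x).ne',
    ← tan_eq_sin_div_cos, tan_arctan]

theorem arccot_cot {θ : ℝ} (h0 : 0 < θ) (hπ : θ < π) : arccot (cot θ) = θ := by
  rw [arccot, cot_eq_cos_div_sin, ← cos_pi_div_two_sub, ← sin_pi_div_two_sub, ← tan_eq_sin_div_cos,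
    arctan_tan (by linarith) (by linarith)]
  ring

end Arccot

namespace V2

variable {n : ℕ}

def inl (n : ℕ) : (Fin n → ℝ) →ₗ[ℝ] V2 n :=
  (LinearEquiv.sumArrowLequivProdArrow _ _ ℝ ℝ).symm.toLinearMap ∘ₗ LinearMap.inl ℝ _ _

def inr (n : ℕ) : (Fin n → ℝ) →ₗ[ℝ] V2 n :=
  (LinearEquiv.sumArrowLequivProdArrow _ _ ℝ ℝ).symm.toLinearMap ∘ₗ LinearMap.inr ℝ _ _

@[simp] theorem inl_apply (v : Fin n → ℝ) : inl n v = Sum.elim v 0 := rfl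

@[simp] theorem inr_apply (v : Fin n → ℝ) : inr n v = Sum.elim (0 : Fin n → ℝ) v := rfl

end V2

section Coordinates

variable {n : ℕ}

def graphLin (B : Matrix (Fin n) (Fin n) ℝ) : (Fin n → ℝ) →ₗ[ℝ] V2 n :=
  V2.inl n ∘ₗ toLin' B + V2.inr n

@[simp] theorem graphLin_apply (B : Matrix (Fin n) (Fin n) ℝ) (v : Fin n → ℝ) :
    graphLin B v = Sum.elim (B *ᵥ v) v := by
  ext (j | j) <;> simp [graphLin]

theorem omegaForm_sumElim (v w v' w' : Fin n → ℝ) :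
    omegaForm n (Sum.elim v w) (Sum.elim v' w') = v ⬝ᵥ w' - w ⬝ᵥ v' := by
  simp [omegaForm, Jn, fromBlocks_mulVec, sumElim_dotProduct_sumElim, neg_mulVec, sub_eq_add_neg]

theorem L0_eq_range_inl (n : ℕ) : L0 n = LinearMap.range (V2.inl n) := by
  have hsingle : (fun i : Fin n => (Pi.single (Sum.inl i) 1 : V2 n)) =
      V2.inl n ∘ Pi.basisFun ℝ (Fin n) := by
    ext i (j | j) <;> simp [Pi.single_apply]
  rw [L0, hsingle, Set.range_comp, Submodule.span_image, Module.Basis.span_eq, Submodule.map_top]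

theorem stdInner_eq_dotProduct (x y : V2 n) : stdInner n x y = x ⬝ᵥ y := rfl

theorem forall_stdInner_L0_eq_zero_iff (y : V2 n) :
    (∀ x ∈ L0 n, stdInner n x y = 0) ↔ y ∈ LinearMap.range (V2.inr n) := by
  rw [L0_eq_range_inl]
  constructor
  · intro h
    refine ⟨y ∘ Sum.inr, ?_⟩
    ext (j | j)
    · simpa [stdInner_eq_dotProduct] using (h _ ⟨Pi.single j 1, rfl⟩).symm
    · rfl
  · rintro ⟨w, rfl⟩ _ ⟨v, rfl⟩
    simp [stdInner_eq_dotProduct, sumElim_dotProduct_sumElim]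

theorem exists_eq_range_graphLin {M : Submodule ℝ (V2 n)}
    (hdim : Module.finrank ℝ M = n) (htrans : M ⊓ L0 n = ⊥) :
    ∃ B : Matrix (Fin n) (Fin n) ℝ, M = LinearMap.range (graphLin B) := by
  let q : M →ₗ[ℝ] Fin n → ℝ := LinearMap.funLeft ℝ ℝ Sum.inr ∘ₗ M.subtype
  have hq : Function.Injective q := by
    refine LinearMap.ker_eq_bot.mp (LinearMap.ker_eq_bot'.mpr fun x hx => ?_)
    have hxL0 : (x : V2 n) ∈ L0 n := by
      rw [L0_eq_range_inl]
      exact ⟨x ∘ Sum.inl, by ext (j | j); rfl; exact (congrFun hx j).symm⟩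
    have : (x : V2 n) ∈ M ⊓ L0 n := ⟨x.2, hxL0⟩
    rw [htrans, Submodule.mem_bot] at this
    exact Subtype.ext this
  have hrank : Module.finrank ℝ M = Module.finrank ℝ (Fin n → ℝ) := by simp [hdim]
  let E : M ≃ₗ[ℝ] Fin n → ℝ := .ofBijective q
    ⟨hq, (LinearMap.injective_iff_surjective_of_finrank_eq_finrank hrank).mp hq⟩
  let B := LinearMap.toMatrix' (LinearMap.funLeft ℝ ℝ Sum.inl ∘ₗ M.subtype ∘ₗ E.symm.toLinearMap)
  have hB : ∀ v, Sum.elim (B *ᵥ v) v = (E.symm v : V2 n) := fun v => by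
    conv_rhs => rw [← Sum.elim_comp_inl_inr (E.symm v : V2 n)]
    congr 1
    · exact LinearMap.toMatrix'_mulVec _ v
    · exact (E.apply_symm_apply v).symm
  refine ⟨B, le_antisymm (fun x hx => ⟨x ∘ Sum.inr, ?_⟩) ?_⟩
  · rintro _ ⟨v, rfl⟩
    rw [graphLin_apply, hB]
    exact (E.symm v).2
  · rw [graphLin_apply, hB, show E.symm (x ∘ Sum.inr) = ⟨x, hx⟩ from E.symm_apply_eq.mpr rfl]

theorem isSymmetric_toEuclideanLin_of_graph {M : Submodule ℝ (V2 n)}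
    {B : Matrix (Fin n) (Fin n) ℝ} (hMB : M = LinearMap.range (graphLin B))
    (hiso : ∀ x ∈ M, ∀ y ∈ M, omegaForm n x y = 0) : (toEuclideanLin B).IsSymmetric := by
  have hmem : ∀ v, graphLin B v ∈ M := fun v => hMB ▸ LinearMap.mem_range_self _ v
  intro x y
  have h := hiso _ (hmem y) _ (hmem x)
  rw [graphLin_apply, graphLin_apply, omegaForm_sumElim, sub_eq_zero] at h
  simp [EuclideanSpace.inner_eq_star_dotProduct, h]

end Coordinates

theorem LinearMap.IsSymmetric.exists_dotOrthonormal_eigenvectors {n : ℕ}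
    {B : Matrix (Fin n) (Fin n) ℝ} (hB : (toEuclideanLin B).IsSymmetric) :
    ∃ (u : Fin n → Fin n → ℝ) (a : Fin n → ℝ),
      DotOrthonormal u ∧ Antitone a ∧ ∀ i, B *ᵥ u i = a i • u i := by
  let b := hB.eigenvectorBasis finrank_euclideanSpace_fin
  refine ⟨fun i => b i, hB.eigenvalues finrank_euclideanSpace_fin, fun i j => ?_,
    hB.eigenvalues_antitone _, fun i => ?_⟩
  · simpa [EuclideanSpace.inner_eq_star_dotProduct, dotProduct_comm] using
      orthonormal_iff_ite.mp b.orthonormal i j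
  · exact congrArg WithLp.ofLp (hB.apply_eigenvectorBasis finrank_euclideanSpace_fin i)

open Polynomial in
theorem Matrix.roots_charpoly_eq_of_mulVec_eq_smul {K ι : Type*} [Field K] [Fintype ι]
    [DecidableEq ι] {B : Matrix ι ι K} {u : ι → ι → K} (hu : LinearIndependent K u)
    {a : ι → K} (h : ∀ i, B *ᵥ u i = a i • u i) : B.charpoly.roots = Finset.univ.val.map a := by
  let b := basisOfLinearIndependentOfCardEqFinrank' u hu (by simp)
  have hb : ∀ i, b i = u i := fun i => Module.Basis.mk_apply ..
  have hdiag : LinearMap.toMatrix b b (toLin' B) = diagonal a := by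
    ext i j
    rw [LinearMap.toMatrix_apply, toLin'_apply, hb, h, ← hb, map_smul, b.repr_self]
    by_cases hij : i = j <;> simp [hij]
  rw [← charpoly_toLin', ← LinearMap.charpoly_toMatrix _ b, hdiag, charpoly_diagonal,
    roots_prod _ _ (by simp [Finset.prod_ne_zero_iff, X_sub_C_ne_zero])]
  simp

def IsAdaptedBasis (n : ℕ) (M : Submodule ℝ (V2 n)) (φ : Fin n → ℝ) (e f : Fin n → V2 n) :
    Prop :=
  IsSymplecticBasis n e f ∧ DotOrthonormal (Sum.elim e f) ∧
    Submodule.span ℝ (Set.range e) = L0 n ∧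
    (∀ y : V2 n, y ∈ Submodule.span ℝ (Set.range f) ↔ ∀ x ∈ L0 n, stdInner n x y = 0) ∧
    M = Submodule.span ℝ (Set.range fun i => cos (φ i) • e i + sin (φ i) • f i)

section AdaptedBasis

variable {n : ℕ} {M : Submodule ℝ (V2 n)} {B : Matrix (Fin n) (Fin n) ℝ} {φ : Fin n → ℝ}

theorem isAdaptedBasis_of_mulVec_eq (hMB : M = LinearMap.range (graphLin B))
    {u : Fin n → Fin n → ℝ} (hu : DotOrthonormal u) (hsin : ∀ i, sin (φ i) ≠ 0)
    (heig : ∀ i, B *ᵥ (sin (φ i) • u i) = cos (φ i) • u i) :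
    IsAdaptedBasis n M φ (V2.inl n ∘ u) (V2.inr n ∘ u) := by
  have hspan : Submodule.span ℝ (Set.range u) = ⊤ := hu.span_eq_top rfl
  have hspan_sin : Submodule.span ℝ (Set.range fun i => sin (φ i) • u i) = ⊤ :=
    (hu.linearIndependent.units_smul fun i => Units.mk0 _ (hsin i)).span_eq_top_of_card_eq_finrank'
      (by simp)
  have hrange {w : Fin n → Fin n → ℝ} (hw : Submodule.span ℝ (Set.range w) = ⊤)
      (g : (Fin n → ℝ) →ₗ[ℝ] V2 n) :
      Submodule.span ℝ (Set.range (g ∘ w)) = LinearMap.range g := by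
    rw [Set.range_comp, Submodule.span_image, hw, Submodule.map_top]
  have hgen : (fun i => cos (φ i) • (V2.inl n ∘ u) i + sin (φ i) • (V2.inr n ∘ u) i) =
      graphLin B ∘ fun i => sin (φ i) • u i := by
    funext i
    simp only [Function.comp_apply]
    rw [graphLin_apply, heig]
    ext (j | j) <;> simp
  refine ⟨⟨fun i j => ?_, fun i j => ?_, fun i j => ?_, hu.sumElim.linearIndependent,
    hu.sumElim.span_eq_top (by simp)⟩, hu.sumElim, ?_, fun y => ?_, ?_⟩
  · simp [omegaForm_sumElim]
  · simp [omegaForm_sumElim]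
  · simp [omegaForm_sumElim, hu i j]
  · rw [L0_eq_range_inl]
    exact hrange hspan (V2.inl n)
  · rw [forall_stdInner_L0_eq_zero_iff]
    exact SetLike.ext_iff.mp (hrange hspan (V2.inr n)) y
  · rw [hgen, hrange hspan_sin, hMB]

theorem IsAdaptedBasis.exists_mulVec_eq (hMB : M = LinearMap.range (graphLin B))
    {e f : Fin n → V2 n} (h : IsAdaptedBasis n M φ e f) :
    ∃ u : Fin n → Fin n → ℝ, DotOrthonormal u ∧
      ∀ i, B *ᵥ (sin (φ i) • u i) = cos (φ i) • u i := by
  obtain ⟨hsymp, horth, hspanE, hspanF, hMspan⟩ := h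
  have he : ∀ i, e i ∈ LinearMap.range (V2.inl n) := fun i =>
    L0_eq_range_inl n ▸ hspanE ▸ Submodule.subset_span ⟨i, rfl⟩
  have hf : ∀ i, f i ∈ LinearMap.range (V2.inr n) := fun i =>
    (forall_stdInner_L0_eq_zero_iff _).mp ((hspanF _).mp (Submodule.subset_span ⟨i, rfl⟩))
  choose u hu using he
  choose w hw using hf
  obtain rfl : e = V2.inl n ∘ u := funext fun i => (hu i).symm
  obtain rfl : f = V2.inr n ∘ w := funext fun i => (hw i).symm
  have hu : DotOrthonormal u := fun i j => by
    simpa [sumElim_dotProduct_sumElim] using horth (.inl i) (.inl j)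
  have hw : DotOrthonormal w := fun i j => by
    simpa [sumElim_dotProduct_sumElim] using horth (.inr i) (.inr j)
  obtain rfl : w = u := (hw.eq_of_dotProduct_eq_ite fun i j => by
    simpa [omegaForm_sumElim] using hsymp.2.2.1 i j).symm
  refine ⟨w, hw, fun i => ?_⟩
  obtain ⟨v, hv⟩ : cos (φ i) • V2.inl n (w i) + sin (φ i) • V2.inr n (w i) ∈
      LinearMap.range (graphLin B) := hMB ▸ hMspan ▸ Submodule.subset_span ⟨i, rfl⟩
  obtain rfl : v = sin (φ i) • w i := funext fun j => by simpa using congrFun hv (.inr j)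
  exact funext fun j => by simpa [mulVec_smul] using congrFun hv (.inl j)

theorem IsAdaptedBasis.map_univ_eq_roots (hMB : M = LinearMap.range (graphLin B))
    {e f : Fin n → V2 n} (h : IsAdaptedBasis n M φ e f) (hpos : ∀ i, 0 < φ i)
    (hlt : ∀ i, φ i < π) : Finset.univ.val.map φ = B.charpoly.roots.map arccot := by
  obtain ⟨u, hu, heig⟩ := h.exists_mulVec_eq hMB
  have hcot : ∀ i, B *ᵥ u i = cot (φ i) • u i := fun i => by
    have hsin := (sin_pos_of_pos_of_lt_pi (hpos i) (hlt i)).ne'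
    rw [cot_eq_cos_div_sin, div_eq_inv_mul, mul_smul, ← heig, mulVec_smul, inv_smul_smul₀ hsin]
  rw [roots_charpoly_eq_of_mulVec_eq_smul hu.linearIndependent hcot, Multiset.map_map]
  exact Multiset.map_congr rfl fun i _ => (arccot_cot (hpos i) (hlt i)).symm

end AdaptedBasis

/-- For every Lagrangian `M` transverse to `L_0` there is a unique nondecreasing tuple
`0 < φ_1 ≤ … ≤ φ_n < π` of angles realized by an orthonormal symplectic basis adapted to
`L_0`, `L_0^⊥` and `M`. -/
theorem lagrangian_angles (n : ℕ) (M : Submodule ℝ (V2 n))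
    (hM : IsLagrangian n M) (htrans : M ⊓ L0 n = ⊥) :
    ∃! φ : Fin n → ℝ,
      (∀ i, 0 < φ i) ∧ Monotone φ ∧ (∀ i, φ i < Real.pi) ∧
      ∃ e f : Fin n → V2 n,
        IsSymplecticBasis n e f ∧
        (∀ a b : Fin n ⊕ Fin n,
          stdInner n (Sum.elim e f a) (Sum.elim e f b) = if a = b then 1 else 0) ∧
        Submodule.span ℝ (Set.range e) = L0 n ∧
        (∀ y : V2 n, y ∈ Submodule.span ℝ (Set.range f) ↔
          ∀ x ∈ L0 n, stdInner n x y = 0) ∧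
        M = Submodule.span ℝ (Set.range fun i : Fin n =>
          Real.cos (φ i) • e i + Real.sin (φ i) • f i) := by
  obtain ⟨B, hMB⟩ := exists_eq_range_graphLin hM.1 htrans
  obtain ⟨u, a, hu, ha, hua⟩ :=
    (isSymmetric_toEuclideanLin_of_graph hMB hM.2).exists_dotOrthonormal_eigenvectors
  have hpos i : 0 < arccot (a i) := arccot_pos (a i)
  have hlt i : arccot (a i) < π := arccot_lt_pi (a i)
  have hbasis := isAdaptedBasis_of_mulVec_eq hMB hu
    (fun i => (sin_pos_of_pos_of_lt_pi (hpos i) (hlt i)).ne')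
    (fun i => by rw [mulVec_smul, hua, smul_smul, cos_arccot, mul_comm])
  refine ⟨arccot ∘ a, ⟨hpos, arccot_strictAnti.antitone.comp ha, hlt, _, _, hbasis⟩, ?_⟩
  rintro ψ ⟨hψpos, hψmono, hψlt, e, f, hψ⟩
  exact hψmono.eq_of_map_univ_val_eq (arccot_strictAnti.antitone.comp ha) <|
    (IsAdaptedBasis.map_univ_eq_roots hMB hψ hψpos hψlt).trans
      (hbasis.map_univ_eq_roots hMB hpos hlt).symm
end
end

section
/- Let B be an orthogonal n×n real matrix and let m be a nonzero real number. Then the 2n×2n block matrix M = [[B, 0],[mB, B]] belongs to Sp(2n,ℝ), and the unique Lagrangian subspace L of (ℝ^{2n}, ω) with M·L = L is L = {0} × ℝ^n, the span of the last n standard basis vectors. -/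
open Matrix

noncomputable section

namespace Aux
variable {n : ℕ}

lemma omega_eq (x y : V2 n) : omegaForm n x y =
    (fun i => x (Sum.inl i)) ⬝ᵥ (fun i => y (Sum.inr i))
      - (fun i => x (Sum.inr i)) ⬝ᵥ (fun i => y (Sum.inl i)) := by
  simp [omegaForm, Jn, fromBlocks_mulVec, dotProduct, Fintype.sum_sum_type,
    Finset.sum_sub_distrib, neg_mulVec, one_mulVec, mul_comm]
  ring

/-- The span of the last n basis vectors. -/
def L0 (n : ℕ) : Submodule ℝ (V2 n) :=
  Submodule.span ℝ (Set.range fun i : Fin n => (Pi.single (Sum.inr i) 1 : V2 n))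

lemma mem_L0 (x : V2 n) : x ∈ L0 n ↔ ∀ i, x (Sum.inl i) = 0 := by
  constructor
  · intro hx
    have h : L0 n ≤ LinearMap.ker (LinearMap.funLeft ℝ ℝ (Sum.inl : Fin n → Fin n ⊕ Fin n)) := by
      rw [L0, Submodule.span_le]
      rintro _ ⟨i, rfl⟩
      simp only [SetLike.mem_coe, LinearMap.mem_ker]
      ext j
      simp [LinearMap.funLeft, Pi.single_apply]
    intro i
    have := h hx
    simpa [LinearMap.funLeft, funext_iff] using congrFun (LinearMap.mem_ker.mp this) i
  · intro hx
    have : x = ∑ i : Fin n, x (Sum.inr i) • (Pi.single (Sum.inr i) 1 : V2 n) := by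
      ext j
      rw [Finset.sum_apply]
      cases j with
      | inl j => simp [hx j, Pi.single_apply]
      | inr j => simp [Pi.single_apply]
    rw [this]
    exact Submodule.sum_mem _ fun i _ => Submodule.smul_mem _ _
      (Submodule.subset_span ⟨i, rfl⟩)

lemma finrank_L0 : Module.finrank ℝ (L0 n) = n := by
  have hli : LinearIndependent ℝ fun i : Fin n => (Pi.single (Sum.inr i) 1 : V2 n) := by
    have := (Pi.basisFun ℝ (Fin n ⊕ Fin n)).linearIndependent
    have h2 := this.comp Sum.inr Sum.inr_injective
    have he : (fun i : Fin n => (Pi.single (Sum.inr i) 1 : V2 n))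
        = (⇑(Pi.basisFun ℝ (Fin n ⊕ Fin n)) ∘ Sum.inr) := by
      funext i; simp
    rw [he]; exact h2
  rw [L0, finrank_span_eq_card hli, Fintype.card_fin]

lemma lagrangian_L0 : IsLagrangian n (L0 n) := by
  refine ⟨finrank_L0, fun x hx y hy => ?_⟩
  rw [omega_eq]
  have hx' := (mem_L0 x).mp hx
  have hy' := (mem_L0 y).mp hy
  simp [dotProduct, hx', hy']

variable {B : Matrix (Fin n) (Fin n) ℝ} {m : ℝ}

lemma BBt (hB : Bᵀ * B = 1) : B * Bᵀ = 1 := by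
  rwa [mul_eq_one_comm] at hB

lemma Bk_orth (hB : Bᵀ * B = 1) (k : ℕ) : (B ^ k)ᵀ * B ^ k = 1 := by
  induction k with
  | zero => simp
  | succ k ih =>
    rw [pow_succ, transpose_mul, mul_assoc, ← mul_assoc (B ^ k)ᵀ, ih, one_mul, hB]

lemma dot_Bk (hB : Bᵀ * B = 1) (k : ℕ) (a b : Fin n → ℝ) :
    (B ^ k *ᵥ a) ⬝ᵥ (B ^ k *ᵥ b) = a ⬝ᵥ b := by
  have h1 : B ^ k *ᵥ a = a ᵥ* (B ^ k)ᵀ := (vecMul_transpose _ _).symm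
  rw [h1, dotProduct_mulVec, vecMul_vecMul, Bk_orth hB, vecMul_one]

/-- powers of M -/
lemma M_pow (B : Matrix (Fin n) (Fin n) ℝ) (m : ℝ) (k : ℕ) :
    (fromBlocks B 0 (m • B) B) ^ k
      = fromBlocks (B ^ k) 0 ((k * m) • B ^ k) (B ^ k) := by
  induction k with
  | zero => simp [← fromBlocks_one]
  | succ k ih =>
    rw [pow_succ, ih, fromBlocks_multiply]
    simp only [pow_succ, Matrix.smul_mul, Matrix.mul_smul, Nat.cast_succ, add_mul, one_mul,
      Matrix.mul_zero, Matrix.zero_mul, add_zero, zero_add, smul_zero, zero_smul]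
    rw [← add_smul]


lemma Mk_mulVec (k : ℕ) (x : V2 n) :
    ((fromBlocks B 0 (m • B) B) ^ k) *ᵥ x =
      Sum.elim (B ^ k *ᵥ (x ∘ Sum.inl))
        ((k * m) • (B ^ k *ᵥ (x ∘ Sum.inl)) + B ^ k *ᵥ (x ∘ Sum.inr)) := by
  rw [M_pow, fromBlocks_mulVec, smul_mulVec, zero_mulVec, add_zero]

lemma key (hB : Bᵀ * B = 1) (hm : m ≠ 0) (L : Submodule ℝ (V2 n))
    (hLag : IsLagrangian n L)
    (hInv : L.map (fromBlocks B 0 (m • B) B).mulVecLin = L) :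
    L ≤ L0 n := by
  set M : Matrix (Fin n ⊕ Fin n) (Fin n ⊕ Fin n) ℝ := fromBlocks B 0 (m • B) B with hM
  -- invariance under powers
  have hstep : ∀ x ∈ L, M *ᵥ x ∈ L := by
    intro x hx
    have h := Submodule.mem_map_of_mem (f := M.mulVecLin) hx
    rw [hInv] at h
    rwa [mulVecLin_apply] at h
  have hpow : ∀ (k : ℕ), ∀ x ∈ L, (M ^ k) *ᵥ x ∈ L := by
    intro k
    induction k with
    | zero => intro x hx; simpa using hx
    | succ k ih =>
      intro x hx
      rw [pow_succ', ← mulVec_mulVec]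
      exact hstep _ (ih x hx)
  -- projections
  set pL : L →ₗ[ℝ] (Fin n → ℝ) :=
    (LinearMap.funLeft ℝ ℝ Sum.inl) ∘ₗ L.subtype with hpL
  set W : Submodule ℝ (Fin n → ℝ) := LinearMap.range pL with hW
  obtain ⟨σ, hσ⟩ := pL.rangeRestrict.exists_rightInverse_of_surjective
    (LinearMap.range_eq_top.2 pL.surjective_rangeRestrict)
  have hσ' : ∀ w : W, ((σ w : V2 n) ∘ Sum.inl) = (w : Fin n → ℝ) := by
    intro w
    have := congrArg Subtype.val (LinearMap.congr_fun hσ w)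
    exact this
  set g : W →ₗ[ℝ] (Fin n → ℝ) :=
    ((LinearMap.funLeft ℝ ℝ Sum.inr) ∘ₗ L.subtype) ∘ₗ σ with hg
  set G : W →L[ℝ] (Fin n → ℝ) := LinearMap.toContinuousLinearMap g with hG
  -- W is invariant under powers of B
  have hWinv : ∀ (k : ℕ) (w : Fin n → ℝ), w ∈ W → B ^ k *ᵥ w ∈ W := by
    rintro k w ⟨x, rfl⟩
    refine ⟨⟨(M ^ k) *ᵥ (x : V2 n), hpow k _ x.2⟩, ?_⟩
    show ((M ^ k) *ᵥ (x : V2 n)) ∘ Sum.inl = _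
    rw [Mk_mulVec]
    rfl
  -- main argument
  intro x hx
  rw [mem_L0]
  set u : Fin n → ℝ := (x ∘ Sum.inl) with hu
  set s : Fin n → ℝ := (x ∘ Sum.inr) with hs
  set Q : ℝ := u ⬝ᵥ u with hQ
  have hQ0 : 0 ≤ Q := Finset.sum_nonneg fun i _ => mul_self_nonneg _
  have huW : u ∈ W := ⟨⟨x, hx⟩, rfl⟩
  -- the key identity for each k
  have hkey : ∀ k : ℕ, (k * |m|) * Q ≤ n * ‖G‖ * Q + |s ⬝ᵥ u| := by
    intro k
    set A : Fin n → ℝ := B ^ k *ᵥ u with hA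
    have hAW : A ∈ W := hWinv k u huW
    set y : L := σ ⟨A, hAW⟩ with hy
    have hy1 : ((y : V2 n) ∘ Sum.inl) = A := hσ' ⟨A, hAW⟩
    have hy2 : ((y : V2 n) ∘ Sum.inr) = G ⟨A, hAW⟩ := by
      rw [hG, LinearMap.coe_toContinuousLinearMap']
      rfl
    have homega : omegaForm n ((M ^ k) *ᵥ x) (y : V2 n) = 0 :=
      hLag.2 _ (hpow k x hx) _ y.2
    rw [omega_eq] at homega
    have e1 : (fun i => ((M ^ k) *ᵥ x) (Sum.inl i)) = A := by
      rw [Mk_mulVec]; rfl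
    have e2 : (fun i => ((M ^ k) *ᵥ x) (Sum.inr i))
        = (k * m) • A + B ^ k *ᵥ s := by
      rw [Mk_mulVec]; rfl
    have e3 : (fun i => (y : V2 n) (Sum.inr i)) = G ⟨A, hAW⟩ := hy2
    have e4 : (fun i => (y : V2 n) (Sum.inl i)) = A := hy1
    rw [e1, e2, e3, e4, add_dotProduct, smul_dotProduct, smul_eq_mul] at homega
    have hAA : A ⬝ᵥ A = Q := dot_Bk hB k u u
    have hsA : (B ^ k *ᵥ s) ⬝ᵥ A = s ⬝ᵥ u := dot_Bk hB k s u
    rw [hAA, hsA] at homega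
    have hiden : (k * m) * Q = A ⬝ᵥ G ⟨A, hAW⟩ - s ⬝ᵥ u := by linarith
    -- bounds
    have hAi : ∀ i, |A i| ≤ Real.sqrt Q := by
      intro i
      rw [← Real.sqrt_sq_eq_abs]
      apply Real.sqrt_le_sqrt
      rw [← hAA]
      calc (A i) ^ 2 = A i * A i := sq _
        _ ≤ ∑ j, A j * A j := Finset.single_le_sum (f := fun j => A j * A j)
            (fun j _ => mul_self_nonneg _) (Finset.mem_univ i)
        _ = A ⬝ᵥ A := rfl
    have hnormA : ‖(⟨A, hAW⟩ : W)‖ ≤ Real.sqrt Q := by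
      have : ‖A‖ ≤ Real.sqrt Q := by
        apply pi_norm_le_iff_of_nonneg (Real.sqrt_nonneg _) |>.2
        intro i
        rw [Real.norm_eq_abs]
        exact hAi i
      exact this
    have hGA : ∀ i, |(G ⟨A, hAW⟩) i| ≤ ‖G‖ * Real.sqrt Q := by
      intro i
      calc |(G ⟨A, hAW⟩) i| ≤ ‖G ⟨A, hAW⟩‖ := by
            rw [← Real.norm_eq_abs]; exact norm_le_pi_norm _ i
        _ ≤ ‖G‖ * ‖(⟨A, hAW⟩ : W)‖ := G.le_opNorm _
        _ ≤ ‖G‖ * Real.sqrt Q := by gcongr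
    have hdot : |A ⬝ᵥ G ⟨A, hAW⟩| ≤ n * ‖G‖ * Q := by
      calc |A ⬝ᵥ G ⟨A, hAW⟩| ≤ ∑ i, |A i * (G ⟨A, hAW⟩) i| :=
            Finset.abs_sum_le_sum_abs _ _
        _ ≤ ∑ _i : Fin n, Real.sqrt Q * (‖G‖ * Real.sqrt Q) := by
            apply Finset.sum_le_sum
            intro i _
            rw [abs_mul]
            exact mul_le_mul (hAi i) (hGA i) (abs_nonneg _) (Real.sqrt_nonneg _)
        _ = n * ‖G‖ * Q := by
            rw [Finset.sum_const, Finset.card_univ, Fintype.card_fin]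
            rw [nsmul_eq_mul]
            rw [show Real.sqrt Q * (‖G‖ * Real.sqrt Q)
                = ‖G‖ * (Real.sqrt Q * Real.sqrt Q) by ring]
            rw [Real.mul_self_sqrt hQ0]
            ring
    calc (k * |m|) * Q = |(k * m) * Q| := by
          rw [abs_mul, abs_mul, Nat.abs_cast, abs_of_nonneg hQ0]
      _ = |A ⬝ᵥ G ⟨A, hAW⟩ - s ⬝ᵥ u| := by rw [hiden]
      _ ≤ |A ⬝ᵥ G ⟨A, hAW⟩| + |s ⬝ᵥ u| := abs_sub _ _
      _ ≤ n * ‖G‖ * Q + |s ⬝ᵥ u| := by linarith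
  -- conclude Q = 0
  have hQzero : Q = 0 := by
    by_contra hne
    have hQpos : 0 < Q := lt_of_le_of_ne hQ0 (Ne.symm hne)
    obtain ⟨k, hk⟩ := exists_nat_gt ((n * ‖G‖ * Q + |s ⬝ᵥ u|) / (|m| * Q))
    have hmQ : 0 < |m| * Q := mul_pos (abs_pos.2 hm) hQpos
    have := hkey k
    have hk' : (n * ‖G‖ * Q + |s ⬝ᵥ u|) < k * (|m| * Q) := (div_lt_iff₀ hmQ).1 hk
    have heq : (k : ℝ) * |m| * Q = k * (|m| * Q) := by ring
    linarith
  intro i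
  have : u i * u i = 0 := by
    have := Finset.sum_eq_zero_iff_of_nonneg
      (fun j (_ : j ∈ Finset.univ) => mul_self_nonneg (u j)) |>.1 hQzero i (Finset.mem_univ i)
    exact this
  exact mul_self_eq_zero.1 this

lemma symplectic_M (hB : Bᵀ * B = 1) :
    IsSymplectic n (fromBlocks B 0 (m • B) B) := by
  show (fromBlocks B 0 (m • B) B)ᵀ * Jn n * (fromBlocks B 0 (m • B) B) = Jn n
  rw [Jn, fromBlocks_transpose, fromBlocks_multiply, fromBlocks_multiply]
  simp [Matrix.smul_mul, Matrix.mul_smul, hB]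

lemma map_L0 (hB : Bᵀ * B = 1) :
    (L0 n).map (fromBlocks B 0 (m • B) B).mulVecLin = L0 n := by
  have hBB : B * Bᵀ = 1 := BBt hB
  apply le_antisymm
  · rintro _ ⟨x, hx, rfl⟩
    rw [mulVecLin_apply, mem_L0]
    intro j
    rw [fromBlocks_mulVec]
    have hx' : (x ∘ Sum.inl) = 0 := funext ((mem_L0 x).1 hx)
    simp [hx']
  · intro y hy
    have hy' : ∀ i, y (Sum.inl i) = 0 := (mem_L0 y).1 hy
    refine ⟨Sum.elim 0 (Bᵀ *ᵥ (y ∘ Sum.inr)), (mem_L0 _).2 fun i => rfl, ?_⟩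
    rw [mulVecLin_apply, fromBlocks_mulVec, Sum.elim_comp_inl, Sum.elim_comp_inr,
      mulVec_zero, mulVec_zero, zero_mulVec, mulVec_mulVec, hBB, one_mulVec,
      add_zero, zero_add]
    ext j
    cases j with
    | inl j => simp [hy' j]
    | inr j => simp

end Aux

/-- For `B ∈ O(n)` and `m ≠ 0`, the block matrix `[[B,0],[mB,B]]` is symplectic, and its
unique invariant Lagrangian is `{0} × ℝ^n`, the span of the last `n` standard basis
vectors. -/
theorem unique_invariant_lagrangian (n : ℕ) (B : Matrix (Fin n) (Fin n) ℝ)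
    (hB : Bᵀ * B = 1) (m : ℝ) (hm : m ≠ 0) :
    IsSymplectic n (Matrix.fromBlocks B 0 (m • B) B) ∧
    IsLagrangian n
      (Submodule.span ℝ (Set.range fun i : Fin n => (Pi.single (Sum.inr i) 1 : V2 n))) ∧
    (Submodule.span ℝ (Set.range fun i : Fin n => (Pi.single (Sum.inr i) 1 : V2 n))).map
        (Matrix.fromBlocks B 0 (m • B) B).mulVecLin =
      Submodule.span ℝ (Set.range fun i : Fin n => (Pi.single (Sum.inr i) 1 : V2 n)) ∧
    ∀ L : Submodule ℝ (V2 n), IsLagrangian n L →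
      L.map (Matrix.fromBlocks B 0 (m • B) B).mulVecLin = L →
      L = Submodule.span ℝ (Set.range fun i : Fin n => (Pi.single (Sum.inr i) 1 : V2 n)) := by
  refine ⟨Aux.symplectic_M hB, Aux.lagrangian_L0, Aux.map_L0 hB, ?_⟩
  intro L hLag hInv
  have hle : L ≤ Aux.L0 n := Aux.key hB hm L hLag hInv
  refine Submodule.eq_of_le_of_finrank_le hle ?_
  show Module.finrank ℝ (Aux.L0 n) ≤ Module.finrank ℝ L
  rw [Aux.finrank_L0, hLag.1]
end
end
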